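/- arXiv:2503.22467 — 5 statements merged into one kernel-verified Lean document; each statement's English description precedes it below -/
import Mathlib

section
/- Let c : Fin p → Fin q be surjective (no cluster is empty) and suppose some cluster contains at least two elements (there exist j ≠ l with c j = c l). Let C be the associated p×q clustering matrix. If ξ, ξ' ∈ ℝ and Σ, Σ' are symmetric q×q real matrices with ξ·I_p + C Σ Cᵀ = ξ'·I_p + C Σ' Cᵀ, then ξ = ξ' and Σ = Σ'. -/
open Matrix

/-- The clustering matrix associated with a clustering `c` of `p` variables into
`q` clusters: `C j k = 1` if `c j = k` and `0` otherwise. -/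
def clusterMatrix {p q : ℕ} (c : Fin p → Fin q) : Matrix (Fin p) (Fin q) ℝ :=
  Matrix.of fun j k => if c j = k then 1 else 0

lemma clusterMatrix_sandwich {p q : ℕ} (c : Fin p → Fin q)
    (M : Matrix (Fin q) (Fin q) ℝ) (j l : Fin p) :
    (clusterMatrix c * M * (clusterMatrix c)ᵀ) j l = M (c j) (c l) := by
  simp [Matrix.mul_apply, Matrix.transpose_apply, clusterMatrix, ite_mul, mul_ite,
    Finset.sum_ite_eq', eq_comm]

/-- Covariance decomposition step for the spherical observed-clusters model: if no
cluster is empty and some cluster has at least two elements, the decomposition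
`ξ·I_p + C Σ Cᵀ` is unique. -/
theorem stmt1 {p q : ℕ} (c : Fin p → Fin q) (hsurj : Function.Surjective c)
    (htwo : ∃ j l : Fin p, j ≠ l ∧ c j = c l)
    (ξ ξ' : ℝ) (Sg Sg' : Matrix (Fin q) (Fin q) ℝ)
    (hSg : Sg.IsSymm) (hSg' : Sg'.IsSymm)
    (h : ξ • (1 : Matrix (Fin p) (Fin p) ℝ) + clusterMatrix c * Sg * (clusterMatrix c)ᵀ
        = ξ' • (1 : Matrix (Fin p) (Fin p) ℝ) + clusterMatrix c * Sg' * (clusterMatrix c)ᵀ) :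
    ξ = ξ' ∧ Sg = Sg' := by
  have hent : ∀ j l : Fin p,
      (ξ • (1 : Matrix (Fin p) (Fin p) ℝ)) j l + Sg (c j) (c l)
        = (ξ' • (1 : Matrix (Fin p) (Fin p) ℝ)) j l + Sg' (c j) (c l) := by
    intro j l
    have := congrFun (congrFun h j) l
    simpa [Matrix.add_apply, clusterMatrix_sandwich] using this
  obtain ⟨j0, l0, hjl, hc⟩ := htwo
  -- off-diagonal within the same cluster gives diagonal of Sg equal
  have hdiagk : Sg (c j0) (c j0) = Sg' (c j0) (c j0) := by
    have := hent j0 l0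
    simpa [Matrix.smul_apply, Matrix.one_apply, hjl, hc] using this
  have hxi : ξ = ξ' := by
    have := hent j0 j0
    simp [Matrix.smul_apply, Matrix.one_apply, hdiagk] at this
    linarith
  refine ⟨hxi, ?_⟩
  ext k k'
  obtain ⟨j, rfl⟩ := hsurj k
  obtain ⟨l, rfl⟩ := hsurj k'
  have := hent j l
  rw [hxi] at this
  linarith
end

section
/- Let c : Fin p → Fin q be a clustering in which every cluster contains at least two elements (for every k ∈ Fin q there exist j ≠ l with c j = c l = k), and let C be the associated p×q clustering matrix. If d, d' : Fin p → ℝ and Σ, Σ' are symmetric q×q real matrices with diag(d) + C Σ Cᵀ = diag(d') + C Σ' Cᵀ, then d = d' and Σ = Σ'. -/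
open Matrix

lemma clusterMatrix_conj {p q : ℕ} (c : Fin p → Fin q) (S : Matrix (Fin q) (Fin q) ℝ)
    (j l : Fin p) :
    (clusterMatrix c * S * (clusterMatrix c)ᵀ) j l = S (c j) (c l) := by
  simp [clusterMatrix, Matrix.mul_apply, Matrix.transpose_apply, ite_mul, mul_ite,
    Finset.sum_ite_eq, Finset.sum_ite_eq']

/-- Covariance decomposition step for the diagonal observed-clusters model: if every
cluster has at least two elements, the decomposition `diag(d) + C Σ Cᵀ` is unique. -/
theorem stmt2 {p q : ℕ} (c : Fin p → Fin q)
    (htwo : ∀ k : Fin q, ∃ j l : Fin p, j ≠ l ∧ c j = k ∧ c l = k)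
    (d d' : Fin p → ℝ) (Sg Sg' : Matrix (Fin q) (Fin q) ℝ)
    (hSg : Sg.IsSymm) (hSg' : Sg'.IsSymm)
    (h : Matrix.diagonal d + clusterMatrix c * Sg * (clusterMatrix c)ᵀ
        = Matrix.diagonal d' + clusterMatrix c * Sg' * (clusterMatrix c)ᵀ) :
    d = d' ∧ Sg = Sg' := by
  have hentry : ∀ j l, Matrix.diagonal d j l + Sg (c j) (c l)
      = Matrix.diagonal d' j l + Sg' (c j) (c l) := by
    intro j l
    have := congrFun (congrFun h j) l
    simpa [Matrix.add_apply, clusterMatrix_conj] using this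
  have hS : Sg = Sg' := by
    ext k k'
    by_cases hkk : k = k'
    · subst hkk
      obtain ⟨j, l, hjl, hj, hl⟩ := htwo k
      have := hentry j l
      simpa [Matrix.diagonal_apply, hjl, hj, hl] using this
    · obtain ⟨j, _, _, hj, _⟩ := htwo k
      obtain ⟨l, _, _, hl, _⟩ := htwo k'
      have hjl : j ≠ l := fun e => hkk (by rw [← hj, ← hl, e])
      have := hentry j l
      simpa [Matrix.diagonal_apply, hjl, hj, hl] using this
  refine ⟨?_, hS⟩
  funext j
  have := hentry j j
  simp [Matrix.diagonal_apply, hS] at this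
  linarith [this]
end

section
/- (Identifiability of the spherical Normal-Block model with observed clusters.) Let n, p, q, d ≥ 1, let c : Fin p → Fin q be surjective with some cluster containing at least two elements, and let C be the associated p×q clustering matrix. Let X be an n×d real matrix of rank d, let ξ, ξ' > 0, let Σ, Σ' be symmetric positive semidefinite q×q real matrices, and let B, B' be d×p real matrices. If for every i ∈ Fin n and every y ∈ ℝ^p the Gaussian density with mean Bᵀ X_i and covariance ξ·I_p + C Σ Cᵀ evaluated at y equals the Gaussian density with mean B'ᵀ X_i and covariance ξ'·I_p + C Σ' Cᵀ evaluated at y (where X_i denotes the i-th row of X, viewed as a vector in ℝ^d), then B = B', ξ = ξ' and Σ = Σ'. -/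
/-!
The log-density of `N(m, S)` is, up to an additive constant, the quadratic polynomial
`-(y - m)ᵀ S⁻¹ (y - m) / 2`; comparing the quadratic and linear parts of two such polynomials that
differ by a constant recovers `S⁻¹` and `S⁻¹ m`, hence `S` and `m`. Equal covariances
`ξ I + C Σ Cᵀ` give back `ξ` and `Σ`: the entry `(j, l)` equals `ξ [j = l] + Σ (c j) (c l)`, so
two distinct variables in one cluster isolate `Σ` on that cluster's diagonal, and then `ξ`.
Finally, equal means `Bᵀ Xᵢ` for all rows say `X B = X B'`, and `X` has full column rank.
-/

open Matrix

/-- Gaussian density with mean `m` and covariance `S`. -/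
noncomputable def gaussDensity {p : ℕ} (m : Fin p → ℝ) (S : Matrix (Fin p) (Fin p) ℝ)
    (y : Fin p → ℝ) : ℝ :=
  (Real.sqrt ((2 * Real.pi) ^ p * S.det))⁻¹ *
    Real.exp (-(1 / 2) * ((y - m) ⬝ᵥ (S⁻¹ *ᵥ (y - m))))

namespace Matrix

variable {l n o K : Type*} [Fintype n]

lemma IsSymm.dotProduct_mulVec_comm [CommRing K] {A : Matrix n n K} (hA : A.IsSymm)
    (x y : n → K) : x ⬝ᵥ (A *ᵥ y) = y ⬝ᵥ (A *ᵥ x) := by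
  rw [dotProduct_mulVec, ← mulVec_transpose, hA.eq, dotProduct_comm]

lemma IsSymm.sub_dotProduct_mulVec_sub [CommRing K] {A : Matrix n n K} (hA : A.IsSymm)
    (y m : n → K) :
    (y - m) ⬝ᵥ (A *ᵥ (y - m)) = y ⬝ᵥ (A *ᵥ y) - 2 * y ⬝ᵥ (A *ᵥ m) + m ⬝ᵥ (A *ᵥ m) := by
  simp only [mulVec_sub, dotProduct_sub, sub_dotProduct, hA.dotProduct_mulVec_comm m y]
  ring

lemma IsSymm.eq_zero_of_forall_dotProduct_mulVec_self [Field K] [CharZero K]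
    {Q : Matrix n n K} (hQ : Q.IsSymm) (h : ∀ y, y ⬝ᵥ (Q *ᵥ y) = 0) : Q = 0 := by
  refine ext_iff_mulVec.2 fun x => ?_
  rw [zero_mulVec]
  refine dotProduct_eq_zero _ fun y => ?_
  have hpolar := h (x + y)
  simp only [mulVec_add, dotProduct_add, add_dotProduct, h x, h y,
    hQ.dotProduct_mulVec_comm x y] at hpolar
  rw [dotProduct_comm]
  linear_combination hpolar / 2

lemma IsSymm.eq_of_forall_sub_dotProduct_mulVec_sub_eq [Field K] [CharZero K]
    {A A' : Matrix n n K} (hA : A.IsSymm) (hA' : A'.IsSymm) {m m' : n → K} {k : K}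
    (h : ∀ y, (y - m) ⬝ᵥ (A *ᵥ (y - m)) - (y - m') ⬝ᵥ (A' *ᵥ (y - m')) = k) :
    A = A' ∧ A *ᵥ m = A' *ᵥ m' := by
  have hexp (y : n → K) : y ⬝ᵥ ((A - A') *ᵥ y) - 2 * y ⬝ᵥ (A *ᵥ m - A' *ᵥ m')
      = k - (m ⬝ᵥ (A *ᵥ m) - m' ⬝ᵥ (A' *ᵥ m')) := by
    rw [← h y, hA.sub_dotProduct_mulVec_sub, hA'.sub_dotProduct_mulVec_sub, sub_mulVec,
      dotProduct_sub, dotProduct_sub]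
    ring
  -- the odd part of `hexp` is the linear term, its even part the quadratic one
  have hlin (y : n → K) : y ⬝ᵥ (A *ᵥ m - A' *ᵥ m') = 0 := by
    have hneg := hexp (-y)
    simp only [mulVec_neg, neg_dotProduct, dotProduct_neg, neg_neg] at hneg
    linear_combination (hneg - hexp y) / 4
  refine ⟨sub_eq_zero.1 ((hA.sub hA').eq_zero_of_forall_dotProduct_mulVec_self fun y => ?_),
    sub_eq_zero.1 (dotProduct_eq_zero _ fun y => by rw [dotProduct_comm, hlin])⟩
  have h0 := hexp 0
  simp only [zero_dotProduct, mul_zero, sub_zero] at h0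
  linear_combination hexp y + 2 * hlin y - h0

lemma mulVec_injective_of_rank_eq_card [Field K] {X : Matrix l n K}
    (hX : X.rank = Fintype.card n) : Function.Injective X.mulVec :=
  mulVec_injective_iff.2 <| linearIndependent_iff_card_eq_finrank_span.2 <|
    hX.symm.trans X.rank_eq_finrank_span_cols

lemma eq_of_mul_eq_mul_of_rank_eq_card [Field K] {X : Matrix l n K}
    (hX : X.rank = Fintype.card n) {B B' : Matrix n o K} (h : X * B = X * B') : B = B' :=
  ext_col fun j => mulVec_injective_of_rank_eq_card hX congr(($h).col j)

omit [Fintype n] in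
lemma PosDef.isSymm {A : Matrix n n ℝ} (hA : A.PosDef) : A.IsSymm :=
  (conjTranspose_eq_transpose_of_trivial A).symm.trans hA.isHermitian.eq

lemma PosDef.smul_one_add_mul_mul_transpose {m : Type*} [Fintype m] [DecidableEq m]
    {ξ : ℝ} (hξ : 0 < ξ) {Sg : Matrix n n ℝ} (hSg : Sg.PosSemidef) (M : Matrix m n ℝ) :
    (ξ • (1 : Matrix m m ℝ) + M * Sg * Mᵀ).PosDef := by
  refine (PosDef.one.smul hξ).add_posSemidef ?_
  simpa only [conjTranspose_eq_transpose_of_trivial] using hSg.mul_mul_conjTranspose_same M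

end Matrix

lemma log_gaussDensity {p : ℕ} (m : Fin p → ℝ) {S : Matrix (Fin p) (Fin p) ℝ} (hS : S.PosDef)
    (y : Fin p → ℝ) :
    Real.log (gaussDensity m S y) =
      -(1 / 2) * Real.log ((2 * Real.pi) ^ p * S.det)
        - 1 / 2 * ((y - m) ⬝ᵥ (S⁻¹ *ᵥ (y - m))) := by
  have hnorm : 0 < (2 * Real.pi) ^ p * S.det := by have := hS.det_pos; positivity
  rw [gaussDensity, Real.log_mul (by positivity) (Real.exp_ne_zero _), Real.log_inv,
    Real.log_sqrt hnorm.le, Real.log_exp]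
  ring

lemma eq_of_gaussDensity_eq {p : ℕ} {m m' : Fin p → ℝ} {S S' : Matrix (Fin p) (Fin p) ℝ}
    (hS : S.PosDef) (hS' : S'.PosDef) (h : ∀ y, gaussDensity m S y = gaussDensity m' S' y) :
    m = m' ∧ S = S' := by
  obtain ⟨hinv, hmean⟩ := hS.inv.isSymm.eq_of_forall_sub_dotProduct_mulVec_sub_eq hS'.inv.isSymm
    (k := Real.log ((2 * Real.pi) ^ p * S'.det) - Real.log ((2 * Real.pi) ^ p * S.det))
    fun y => by
      have hlog := congrArg Real.log (h y)
      rw [log_gaussDensity m hS, log_gaussDensity m' hS'] at hlog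
      linear_combination -2 * hlog
  refine ⟨mulVec_injective_iff_isUnit.2 hS.inv.isUnit ?_, Matrix.inv_inj hinv hS.det_pos.ne'.isUnit⟩
  rw [hmean, hinv]

lemma clusterMatrix_mul_mul_transpose_apply {p q : ℕ} (c : Fin p → Fin q)
    (Sg : Matrix (Fin q) (Fin q) ℝ) (j l : Fin p) :
    (clusterMatrix c * Sg * (clusterMatrix c)ᵀ) j l = Sg (c j) (c l) := by
  simp [clusterMatrix, mul_apply, ite_mul, mul_ite]

lemma eq_of_smul_one_add_clusterMatrix_eq {p q : ℕ} {c : Fin p → Fin q}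
    (hsurj : Function.Surjective c) (htwo : ∃ j l : Fin p, j ≠ l ∧ c j = c l) {ξ ξ' : ℝ}
    {Sg Sg' : Matrix (Fin q) (Fin q) ℝ}
    (h : ξ • (1 : Matrix (Fin p) (Fin p) ℝ) + clusterMatrix c * Sg * (clusterMatrix c)ᵀ
      = ξ' • (1 : Matrix (Fin p) (Fin p) ℝ) + clusterMatrix c * Sg' * (clusterMatrix c)ᵀ) :
    ξ = ξ' ∧ Sg = Sg' := by
  have hentry (j l : Fin p) :
      ξ * (if j = l then 1 else 0) + Sg (c j) (c l)
        = ξ' * (if j = l then 1 else 0) + Sg' (c j) (c l) := by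
    simpa [clusterMatrix_mul_mul_transpose_apply, one_apply] using congr_fun₂ h j l
  obtain ⟨j, l, hjl, hc⟩ := htwo
  have hξ : ξ = ξ' := by
    have hoff := hentry j l
    have hdiag := hentry l l
    simp only [hjl, hc, if_true, if_false] at hoff hdiag
    linarith
  refine ⟨hξ, ext fun k k' => ?_⟩
  obtain ⟨j, rfl⟩ := hsurj k
  obtain ⟨l, rfl⟩ := hsurj k'
  simpa [hξ] using hentry j l

theorem stmt3_general {n p q d : ℕ} (hn : 1 ≤ n)
    (c : Fin p → Fin q) (hsurj : Function.Surjective c)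
    (htwo : ∃ j l : Fin p, j ≠ l ∧ c j = c l)
    (X : Matrix (Fin n) (Fin d) ℝ) (hX : X.rank = d)
    (ξ ξ' : ℝ) (hξ : 0 < ξ) (hξ' : 0 < ξ')
    (Sg Sg' : Matrix (Fin q) (Fin q) ℝ) (hSg : Sg.PosSemidef) (hSg' : Sg'.PosSemidef)
    (B B' : Matrix (Fin d) (Fin p) ℝ)
    (h : ∀ (i : Fin n) (y : Fin p → ℝ),
      gaussDensity (Bᵀ *ᵥ (fun k => X i k))
        (ξ • (1 : Matrix (Fin p) (Fin p) ℝ) + clusterMatrix c * Sg * (clusterMatrix c)ᵀ) y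
      = gaussDensity (B'ᵀ *ᵥ (fun k => X i k))
        (ξ' • (1 : Matrix (Fin p) (Fin p) ℝ) + clusterMatrix c * Sg' * (clusterMatrix c)ᵀ) y) :
    B = B' ∧ ξ = ξ' ∧ Sg = Sg' := by
  have hrow (i : Fin n) := eq_of_gaussDensity_eq
    (PosDef.smul_one_add_mul_mul_transpose hξ hSg (clusterMatrix c))
    (PosDef.smul_one_add_mul_mul_transpose hξ' hSg' (clusterMatrix c)) (h i)
  obtain ⟨hξξ', hSgSg'⟩ := eq_of_smul_one_add_clusterMatrix_eq hsurj htwo (hrow ⟨0, hn⟩).2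
  refine ⟨eq_of_mul_eq_mul_of_rank_eq_card (hX.trans (Fintype.card_fin d).symm) ?_, hξξ', hSgSg'⟩
  funext i
  simpa only [mul_apply_eq_vecMul, mulVec_transpose] using (hrow i).1

/-- Identifiability of the spherical Normal-Block model with observed clusters. -/
theorem stmt3 {n p q d : ℕ} (hn : 1 ≤ n) (hp : 1 ≤ p) (hq : 1 ≤ q) (hd : 1 ≤ d)
    (c : Fin p → Fin q) (hsurj : Function.Surjective c)
    (htwo : ∃ j l : Fin p, j ≠ l ∧ c j = c l)
    (X : Matrix (Fin n) (Fin d) ℝ) (hX : X.rank = d)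
    (ξ ξ' : ℝ) (hξ : 0 < ξ) (hξ' : 0 < ξ')
    (Sg Sg' : Matrix (Fin q) (Fin q) ℝ) (hSg : Sg.PosSemidef) (hSg' : Sg'.PosSemidef)
    (B B' : Matrix (Fin d) (Fin p) ℝ)
    (h : ∀ (i : Fin n) (y : Fin p → ℝ),
      gaussDensity (Bᵀ *ᵥ (fun k => X i k))
        (ξ • (1 : Matrix (Fin p) (Fin p) ℝ) + clusterMatrix c * Sg * (clusterMatrix c)ᵀ) y
      = gaussDensity (B'ᵀ *ᵥ (fun k => X i k))
        (ξ' • (1 : Matrix (Fin p) (Fin p) ℝ) + clusterMatrix c * Sg' * (clusterMatrix c)ᵀ) y) :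
    B = B' ∧ ξ = ξ' ∧ Sg = Sg' :=
  stmt3_general hn c hsurj htwo X hX ξ ξ' hξ hξ' Sg Sg' hSg hSg' B B' h
end

section
/- Let Σ be a symmetric q×q real matrix whose diagonal entries are pairwise distinct, and let d : Fin p → ℝ. Then the map sending a clustering c : Fin p → Fin q to the p×p matrix diag(d) + C_c Σ C_cᵀ (where C_c is the clustering matrix associated with c) is injective: if diag(d) + C_c Σ C_cᵀ = diag(d) + C_{c'} Σ C_{c'}ᵀ then c = c'. -/
open Matrix

lemma clusterMatrix_entry {p q : ℕ} (c : Fin p → Fin q) (Sg : Matrix (Fin q) (Fin q) ℝ)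
    (j j' : Fin p) :
    (clusterMatrix c * Sg * (clusterMatrix c)ᵀ) j j' = Sg (c j) (c j') := by
  simp [Matrix.mul_apply, clusterMatrix, Matrix.transpose_apply, Finset.sum_ite_eq,
    ite_mul, mul_ite, Finset.mul_sum]

/-- If the diagonal entries of the symmetric matrix `Σ` are pairwise distinct, the map
sending a clustering `c` to `diag(d) + C_c Σ C_cᵀ` is injective. -/
theorem stmt6 {p q : ℕ} (Sg : Matrix (Fin q) (Fin q) ℝ) (hSg : Sg.IsSymm)
    (hdiag : ∀ k1 k2 : Fin q, k1 ≠ k2 → Sg k1 k1 ≠ Sg k2 k2)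
    (d : Fin p → ℝ) :
    Function.Injective (fun c : Fin p → Fin q =>
      Matrix.diagonal d + clusterMatrix c * Sg * (clusterMatrix c)ᵀ) := by
  intro c c' h
  funext j
  have hj := congrFun (congrFun h j) j
  simp only [Matrix.add_apply, clusterMatrix_entry, add_right_inj] at hj
  by_contra hne
  exact hdiag _ _ hne hj
end

section
/- (Concavity of the ELBO in the variational means M.) Fix a p×q real matrix τ with nonnegative entries, a vector λ : Fin p → ℝ with λ_j > 0 for all j, a symmetric positive semidefinite q×q real matrix Ω, and an n×p real matrix R. Then the function mapping an n×q real matrix M to ∑_{i,j} λ_j R_{i j} (M τᵀ)_{i j} − (1/2) ∑_{i,k} (∑_j τ_{j k} λ_j) M_{i k}² − (1/2) ∑_i (M Ω Mᵀ)_{i i} is concave on the space of n×q real matrices. -/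
/-!
The function is a linear term minus half of two quadratic forms in `M`. Row by row, these are
`Mᵢ ↦ Mᵢ ⬝ Ω Mᵢ` and `Mᵢ ↦ Mᵢ ⬝ diag(τᵀλ) Mᵢ`, both given by positive semidefinite matrices, and a
positive semidefinite quadratic form is convex: along a segment its convexity defect is
`a b Q(x - y) ≥ 0`.
-/

open Matrix

theorem ConvexOn.fun_sum {𝕜 E β ι : Type*} [Semiring 𝕜] [PartialOrder 𝕜] [AddCommMonoid E]
    [AddCommMonoid β] [PartialOrder β] [IsOrderedAddMonoid β] [SMul 𝕜 E] [Module 𝕜 β]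
    [PosSMulMono 𝕜 β] {s : Set E} (hs : Convex 𝕜 s) {t : Finset ι} {f : ι → E → β}
    (hf : ∀ i ∈ t, ConvexOn 𝕜 s (f i)) : ConvexOn 𝕜 s fun x => ∑ i ∈ t, f i x := by
  classical
  induction t using Finset.induction_on with
  | empty => simpa using convexOn_const (0 : β) hs
  | insert a t ha ih =>
    simp only [Finset.sum_insert ha]
    exact (hf a (t.mem_insert_self a)).add (ih fun i hi => hf i (Finset.mem_insert_of_mem hi))

theorem LinearMap.BilinForm.convexOn_apply_self {𝕜 E : Type*} [Field 𝕜] [LinearOrder 𝕜]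
    [IsStrictOrderedRing 𝕜] [AddCommGroup E] [Module 𝕜 E] (B : LinearMap.BilinForm 𝕜 E)
    (hB : ∀ x, 0 ≤ B x x) : ConvexOn 𝕜 Set.univ fun x => B x x := by
  refine ⟨convex_univ, fun x _ y _ a b ha hb hab => ?_⟩
  have defect : a • B x x + b • B y y - B (a • x + b • y) (a • x + b • y) =
      a * b * B (x - y) (x - y) := by
    simp only [map_add, map_sub, map_smul, LinearMap.add_apply, LinearMap.sub_apply,
      LinearMap.smul_apply, smul_eq_mul]
    linear_combination (-(a * B x x + b * B y y)) * hab
  have := mul_nonneg (mul_nonneg ha hb) (hB (x - y))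
  linarith

theorem Matrix.PosSemidef.convexOn_dotProduct_mulVec {n : Type*} [Fintype n]
    {A : Matrix n n ℝ} (hA : A.PosSemidef) :
    ConvexOn ℝ Set.univ fun x : n → ℝ => x ⬝ᵥ A *ᵥ x := by
  classical
  have nonneg (x : n → ℝ) : 0 ≤ toLinearMap₂' ℝ A x x := by
    simpa [toLinearMap₂'_apply'] using hA.dotProduct_mulVec_nonneg x
  simpa [toLinearMap₂'_apply'] using LinearMap.BilinForm.convexOn_apply_self _ nonneg

theorem Matrix.mul_mul_transpose_apply_self {m n R : Type*} [Fintype n] [CommSemiring R]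
    (M : Matrix m n R) (A : Matrix n n R) (i : m) :
    (M * A * Mᵀ) i i = M i ⬝ᵥ A *ᵥ M i := by
  rw [Matrix.mul_assoc]
  simp [mul_apply, dotProduct, mulVec, Finset.mul_sum, mul_comm]

theorem Matrix.trace_mul_diagonal_mul_transpose {m n R : Type*} [Fintype m] [Fintype n]
    [DecidableEq n] [CommSemiring R] (M : Matrix m n R) (d : n → R) :
    (M * diagonal d * Mᵀ).trace = ∑ i, ∑ k, d k * M i k ^ 2 := by
  simp only [trace, diag, mul_mul_transpose_apply_self, mulVec_diagonal, dotProduct]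
  congr! 2
  ring

theorem Matrix.PosSemidef.convexOn_trace_mul_mul_transpose {m n : Type*} [Fintype m]
    [Fintype n] {A : Matrix n n ℝ} (hA : A.PosSemidef) :
    ConvexOn ℝ Set.univ fun M : Matrix m n ℝ => (M * A * Mᵀ).trace := by
  simp only [trace, diag, mul_mul_transpose_apply_self]
  exact ConvexOn.fun_sum convex_univ fun i _ =>
    hA.convexOn_dotProduct_mulVec.comp_linearMap (LinearMap.proj i : (m → n → ℝ) →ₗ[ℝ] n → ℝ)

/-- Concavity of the ELBO in the variational means `M`: with `τ` entrywise
nonnegative, `λ` (here `lam`) positive, `Ω` positive semidefinite and `R` fixed,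
the function
`M ↦ ∑_{i,j} λ_j R_{ij} (Mτᵀ)_{ij} − (1/2) ∑_{i,k} (∑_j τ_{jk} λ_j) M_{ik}²
  − (1/2) ∑_i (M Ω Mᵀ)_{ii}`
is concave on the space of `n×q` real matrices. -/
theorem stmt18 {n p q : ℕ} (τ : Matrix (Fin p) (Fin q) ℝ)
    (hτ : ∀ j k, 0 ≤ τ j k) (lam : Fin p → ℝ) (hlam : ∀ j, 0 < lam j)
    (Ω : Matrix (Fin q) (Fin q) ℝ) (hΩ : Ω.PosSemidef)
    (R : Matrix (Fin n) (Fin p) ℝ) :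
    ConcaveOn ℝ Set.univ
      (fun M : Matrix (Fin n) (Fin q) ℝ =>
        (∑ i, ∑ j, lam j * R i j * (M * τᵀ) i j)
          - (1 / 2) * ∑ i, ∑ k, (∑ j, τ j k * lam j) * (M i k) ^ 2
          - (1 / 2) * ∑ i, (M * Ω * Mᵀ) i i) := by
  have linear : ConcaveOn ℝ Set.univ
      fun M : Matrix (Fin n) (Fin q) ℝ => ∑ i, ∑ j, lam j * R i j * (M * τᵀ) i j :=
    LinearMap.concaveOn (E := Matrix (Fin n) (Fin q) ℝ)
      { toFun := fun M => ∑ i, ∑ j, lam j * R i j * (M * τᵀ) i j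
        map_add' := fun M N => by simp [Matrix.add_mul, mul_add, Finset.sum_add_distrib]
        map_smul' := fun c M => by simp [Finset.mul_sum, mul_left_comm] }
      convex_univ
  have weights_nonneg : 0 ≤ fun k => ∑ j, τ j k * lam j := fun k =>
    Finset.sum_nonneg fun j _ => mul_nonneg (hτ j k) (hlam j).le
  have diagonal_part := (PosSemidef.diagonal weights_nonneg).convexOn_trace_mul_mul_transpose
    (m := Fin n)
  simp only [trace_mul_diagonal_mul_transpose] at diagonal_part
  exact (linear.sub (diagonal_part.smul (by norm_num))).sub
    (hΩ.convexOn_trace_mul_mul_transpose.smul (by norm_num))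
end
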